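/- (Claim A of the Reidemeister–Schreier proof) Under the hypotheses of the monoid Reidemeister–Schreier theorem — in particular hypothesis (a): for all x ∈ X, h**(I, f(x)) = (v, c) implies v ∼_𝒮 x and c = I — define g on special words w (those with h**(I,w) = (v,I)) by g(w) = v. Then for all v ∈ X*, the word f*(v) is special and v ∼_𝒮 g(f*(v)). -/
import Mathlib


/-- The smallest monoid congruence on words (lists) over `X` containing the set of
relations `S`: reflexive, symmetric, transitive, contains `S`, and compatible with
concatenation. -/
inductive Cong {X : Type*} (S : Set (List X × List X)) : List X → List X → Prop
  | base {w v : List X} : (w, v) ∈ S → Cong S w v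
  | refl (w : List X) : Cong S w w
  | symm {w v : List X} : Cong S w v → Cong S v w
  | trans {w v u : List X} : Cong S w v → Cong S v u → Cong S w u
  | append {w v w' v' : List X} : Cong S w v → Cong S w' v' → Cong S (w ++ w') (v ++ v')

/-- The stateful extension `h** : C × Y* → X* × C` of `h : C × Y → X* × C`:
it threads the state through the letters of the word and concatenates the
output words. -/
def hss {C X Y : Type*} (h : C → Y → List X × C) : C → List Y → List X × C
  | c, [] => ([], c)
  | c, y :: ys =>
    let p := h c y
    let q := hss h p.2 ys
    (p.1 ++ q.1, q.2)

/-- The homomorphic extension `f* : X* → Y*` of `f : X → Y*`. -/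
def fstar {X Y : Type*} (f : X → List Y) : List X → List Y
  | [] => []
  | x :: xs => f x ++ fstar f xs

theorem hss_append {C X Y : Type*} (h : C → Y → List X × C) :
    ∀ (u w : List Y) (c : C),
      hss h c (u ++ w) =
        ((hss h c u).1 ++ (hss h (hss h c u).2 w).1, (hss h (hss h c u).2 w).2
        ) := by
  intro u
  induction u with
  | nil => intro w c; simp [hss]
  | cons y ys ih =>
      intro w c
      simp [hss, ih, List.append_assoc]

/-- Claim A of the Reidemeister–Schreier proof: under hypothesis (a), for every
word `v ∈ X*` the word `f*(v)` is special (i.e. `h**(I, f*(v))` has final state `I`)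
and `v ∼_𝒮 g(f*(v))`, where `g` of a special word is the first component of `h**(I, -)`. -/
theorem claim_A {X Y C : Type*}
    (S : Set (List X × List X))
    (I : C) (f : X → List Y) (h : C → Y → List X × C)
    (ha : ∀ x : X, ∀ v : List X, ∀ c : C,
      hss h I (f x) = (v, c) → Cong S v [x] ∧ c = I) :
    ∀ v : List X, (hss h I (fstar f v)).2 = I ∧ Cong S v (hss h I (fstar f v)).1 := by
  intro v
  induction v with
  | nil => exact ⟨rfl, Cong.refl []⟩
  | cons x xs ih =>
      obtain ⟨hx1, hx2⟩ := ha x (hss h I (f x)).1 (hss h I (f x)).2 rfl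
      have key : fstar f (x :: xs) = f x ++ fstar f xs := rfl
      rw [key, hss_append, hx2]
      refine ⟨ih.1, ?_⟩
      have : Cong S ([x] ++ xs) ((hss h I (f x)).1 ++ (hss h I (fstar f xs)).1) :=
        Cong.append (Cong.symm hx1) ih.2
      simpa using this
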